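/- arXiv:2006.05691 — 3 statements merged into one kernel-verified Lean document; each statement's English description precedes it below -/
import Mathlib

section
/- Let G be a finite directed graph on vertex set V and let c be the minimum size of a head-tail vertex cover of G. Then there exists a weighted adjacency matrix W of G (i.e., a real matrix with W(X,Y) ≠ 0 if and only if X→Y is an edge of G) such that rank(W) = c. -/
open Matrix Polynomial

section Aux

variable {V : Type*} [Fintype V] [DecidableEq V]

private lemma aux_rank_submatrix_le {ι : Type*} [Fintype ι] [DecidableEq ι]
    (A : Matrix V V ℝ) (f g : ι → V) : (A.submatrix f g).rank ≤ A.rank := by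
  have h1 : A.submatrix f id = ((1 : Matrix V V ℝ).submatrix f id) * A := by
    have := Matrix.submatrix_mul (1 : Matrix V V ℝ) A f id id Function.bijective_id
    rw [Matrix.one_mul] at this
    simpa using this
  have h2 : A.submatrix f g = (A.submatrix f id) * ((1 : Matrix V V ℝ).submatrix id g) := by
    have := Matrix.submatrix_mul A (1 : Matrix V V ℝ) f id g Function.bijective_id
    rw [Matrix.mul_one] at this
    simpa using this
  calc (A.submatrix f g).rank
      ≤ (A.submatrix f id).rank := by rw [h2]; exact Matrix.rank_mul_le_left _ _
    _ ≤ A.rank := by rw [h1]; exact Matrix.rank_mul_le_right _ _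

private lemma aux_rank_add_le (A B : Matrix V V ℝ) : (A + B).rank ≤ A.rank + B.rank := by
  rw [Matrix.rank, Matrix.rank, Matrix.rank]
  have h : (A + B).mulVecLin = A.mulVecLin + B.mulVecLin := by
    ext v i
    simp [Matrix.add_mulVec]
  rw [h]
  have hr : LinearMap.range (A.mulVecLin + B.mulVecLin) ≤
      LinearMap.range A.mulVecLin ⊔ LinearMap.range B.mulVecLin := by
    rintro x ⟨v, rfl⟩
    exact Submodule.mem_sup.2 ⟨A.mulVecLin v, ⟨v, rfl⟩, B.mulVecLin v, ⟨v, rfl⟩, rfl⟩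
  exact le_trans (Submodule.finrank_mono hr)
    (Submodule.finrank_add_le_finrank_add_finrank _ _)

private lemma aux_rank_le_cover (W : Matrix V V ℝ) (H T : Finset V)
    (hc : ∀ X Y : V, W X Y ≠ 0 → Y ∈ H ∨ X ∈ T) : W.rank ≤ H.card + T.card := by
  classical
  set d1 : V → ℝ := fun x => if x ∈ T then 1 else 0 with hd1
  set d2 : V → ℝ := fun y => if y ∈ H then 1 else 0 with hd2
  set W1 : Matrix V V ℝ := Matrix.diagonal d1 * W with hW1def
  set W2 : Matrix V V ℝ := Matrix.of (fun x y => if x ∈ T then 0 else W x y) with hW2def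
  have hsum : W = W1 + W2 := by
    ext x y
    simp only [hW1def, hW2def, Matrix.add_apply, Matrix.diagonal_mul, Matrix.of_apply, hd1]
    by_cases hx : x ∈ T <;> simp [hx]
  have hW2 : W2 = W2 * Matrix.diagonal d2 := by
    ext x y
    rw [Matrix.mul_diagonal]
    by_cases hy : y ∈ H
    · simp [hd2, hy]
    · simp only [hd2, if_neg hy, mul_zero]
      by_cases hx : x ∈ T
      · simp [hW2def, hx]
      · simp only [hW2def, Matrix.of_apply, if_neg hx]
        by_contra h
        rcases hc x y h with h1 | h1
        · exact hy h1
        · exact hx h1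
  have h1 : W1.rank ≤ T.card := by
    calc W1.rank ≤ (Matrix.diagonal d1).rank := Matrix.rank_mul_le_left _ _
      _ = Fintype.card {i // d1 i ≠ 0} := Matrix.rank_diagonal d1
      _ = T.card := by
          rw [← Fintype.card_coe T]
          apply Fintype.card_congr
          apply Equiv.subtypeEquivRight
          intro x
          simp [hd1]
  have h2 : W2.rank ≤ H.card := by
    calc W2.rank = (W2 * Matrix.diagonal d2).rank := by rw [← hW2]
      _ ≤ (Matrix.diagonal d2).rank := Matrix.rank_mul_le_right _ _
      _ = Fintype.card {i // d2 i ≠ 0} := Matrix.rank_diagonal d2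
      _ = H.card := by
          rw [← Fintype.card_coe H]
          apply Fintype.card_congr
          apply Equiv.subtypeEquivRight
          intro x
          simp [hd2]
  calc W.rank = (W1 + W2).rank := by rw [← hsum]
    _ ≤ W1.rank + W2.rank := aux_rank_add_le _ _
    _ ≤ T.card + H.card := add_le_add h1 h2
    _ = H.card + T.card := Nat.add_comm _ _

end Aux

/-- There is a weighted adjacency matrix of the graph whose rank equals
the minimum size of a head-tail vertex cover. -/
theorem exists_weighted_adjacency_rank_eq_min_cover
    {V : Type*} [Fintype V] [DecidableEq V] (E : V → V → Prop) :
    ∃ W : Matrix V V ℝ, (∀ X Y : V, W X Y ≠ 0 ↔ E X Y) ∧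
      W.rank = sInf {c : ℕ | ∃ H T : Finset V,
        (∀ X Y : V, E X Y → Y ∈ H ∨ X ∈ T) ∧ H.card + T.card = c} := by
  classical
  set S : Set ℕ := {c : ℕ | ∃ H T : Finset V,
      (∀ X Y : V, E X Y → Y ∈ H ∨ X ∈ T) ∧ H.card + T.card = c} with hS
  have hne : S.Nonempty := by
    refine ⟨(Finset.univ : Finset V).card, (Finset.univ : Finset V), (∅ : Finset V), fun X Y _ => Or.inl (Finset.mem_univ Y), ?_⟩
    simp
  set c := sInf S with hc
  obtain ⟨H, T, hcov, hcard⟩ : c ∈ S := Nat.sInf_mem hne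
  -- Hall's condition for T (matching tails in T to heads outside H)
  set t₁ : ↥T → Finset V := fun t => Finset.univ.filter (fun y => E t.1 y ∧ y ∉ H) with ht₁
  have hall₁ : ∀ s : Finset ↥T, s.card ≤ (s.biUnion t₁).card := by
    intro s
    by_contra hlt
    push_neg at hlt
    set N := s.biUnion t₁ with hN
    set H' := H ∪ N with hH'
    set T' := T \ (s.image Subtype.val) with hT'
    have hmem : H'.card + T'.card ∈ S := by
      refine ⟨H', T', ?_, rfl⟩
      intro X Y hE
      rcases hcov X Y hE with hY | hX
      · exact Or.inl (Finset.mem_union_left _ hY)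
      · by_cases hXs : X ∈ s.image Subtype.val
        · obtain ⟨t, hts, htX⟩ := Finset.mem_image.1 hXs
          by_cases hYH : Y ∈ H
          · exact Or.inl (Finset.mem_union_left _ hYH)
          · left
            apply Finset.mem_union_right
            exact Finset.mem_biUnion.2 ⟨t, hts, by
              simp only [ht₁, Finset.mem_filter, Finset.mem_univ, true_and]
              exact ⟨htX ▸ hE, hYH⟩⟩
        · exact Or.inr (Finset.mem_sdiff.2 ⟨hX, hXs⟩)
    have himg : s.image Subtype.val ⊆ T := by
      intro x hx
      obtain ⟨t, _, rfl⟩ := Finset.mem_image.1 hx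
      exact t.2
    have hcards : (s.image Subtype.val).card = s.card :=
      Finset.card_image_of_injective _ Subtype.val_injective
    have hT'card : T'.card = T.card - s.card := by
      rw [hT', Finset.card_sdiff_of_subset himg, hcards]
    have hsle : s.card ≤ T.card := hcards ▸ Finset.card_le_card himg
    have hH'card : H'.card ≤ H.card + N.card := Finset.card_union_le _ _
    have : H'.card + T'.card < c := by
      rw [hT'card]
      have := hcard
      omega
    exact absurd (Nat.sInf_le hmem) (by omega)
  obtain ⟨f, hfinj, hf⟩ := (Finset.all_card_le_biUnion_card_iff_exists_injective t₁).1 hall₁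
  have hfE : ∀ t : ↥T, E t.1 (f t) ∧ f t ∉ H := by
    intro t
    have := hf t
    simp only [ht₁, Finset.mem_filter, Finset.mem_univ, true_and] at this
    exact this
  -- Hall's condition for H (matching heads in H to tails outside T)
  set t₂ : ↥H → Finset V := fun h => Finset.univ.filter (fun x => E x h.1 ∧ x ∉ T) with ht₂
  have hall₂ : ∀ s : Finset ↥H, s.card ≤ (s.biUnion t₂).card := by
    intro s
    by_contra hlt
    push_neg at hlt
    set N := s.biUnion t₂ with hN
    set H' := H \ (s.image Subtype.val) with hH'
    set T' := T ∪ N with hT'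
    have hmem : H'.card + T'.card ∈ S := by
      refine ⟨H', T', ?_, rfl⟩
      intro X Y hE
      rcases hcov X Y hE with hY | hX
      · by_cases hYs : Y ∈ s.image Subtype.val
        · obtain ⟨h, hhs, hhY⟩ := Finset.mem_image.1 hYs
          by_cases hXT : X ∈ T
          · exact Or.inr (Finset.mem_union_left _ hXT)
          · right
            apply Finset.mem_union_right
            exact Finset.mem_biUnion.2 ⟨h, hhs, by
              simp only [ht₂, Finset.mem_filter, Finset.mem_univ, true_and]
              exact ⟨hhY ▸ hE, hXT⟩⟩
        · exact Or.inl (Finset.mem_sdiff.2 ⟨hY, hYs⟩)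
      · exact Or.inr (Finset.mem_union_left _ hX)
    have himg : s.image Subtype.val ⊆ H := by
      intro x hx
      obtain ⟨h, _, rfl⟩ := Finset.mem_image.1 hx
      exact h.2
    have hcards : (s.image Subtype.val).card = s.card :=
      Finset.card_image_of_injective _ Subtype.val_injective
    have hH'card : H'.card = H.card - s.card := by
      rw [hH', Finset.card_sdiff_of_subset himg, hcards]
    have hsle : s.card ≤ H.card := hcards ▸ Finset.card_le_card himg
    have hT'card : T'.card ≤ T.card + N.card := Finset.card_union_le _ _
    have : H'.card + T'.card < c := by
      rw [hH'card]
      have := hcard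
      omega
    exact absurd (Nat.sInf_le hmem) (by omega)
  obtain ⟨g, hginj, hg⟩ := (Finset.all_card_le_biUnion_card_iff_exists_injective t₂).1 hall₂
  have hgE : ∀ h : ↥H, E (g h) h.1 ∧ g h ∉ T := by
    intro h
    have := hg h
    simp only [ht₂, Finset.mem_filter, Finset.mem_univ, true_and] at this
    exact this
  -- The combined "matching" of c edges with distinct tails and distinct heads
  set tail : ↥T ⊕ ↥H → V := Sum.elim (fun t => t.1) g with htail
  set head : ↥T ⊕ ↥H → V := Sum.elim f (fun h => h.1) with hhead
  have htailinj : Function.Injective tail := by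
    rintro (t | h) (t' | h') hEq <;> simp only [htail, Sum.elim_inl, Sum.elim_inr] at hEq
    · exact congrArg Sum.inl (Subtype.ext hEq)
    · exact absurd (hEq ▸ t.2) (hgE h').2
    · exact absurd (hEq.symm ▸ t'.2) (hgE h).2
    · exact congrArg Sum.inr (hginj hEq)
  have hheadinj : Function.Injective head := by
    rintro (t | h) (t' | h') hEq <;> simp only [hhead, Sum.elim_inl, Sum.elim_inr] at hEq
    · exact congrArg Sum.inl (hfinj hEq)
    · exact absurd (hEq.symm ▸ h'.2) (hfE t).2
    · exact absurd (hEq ▸ h.2) (hfE t').2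
    · exact congrArg Sum.inr (Subtype.ext hEq)
  have hedge : ∀ i : ↥T ⊕ ↥H, E (tail i) (head i) := by
    rintro (t | h)
    · exact (hfE t).1
    · exact (hgE h).1
  have hcardι : Fintype.card (↥T ⊕ ↥H) = c := by
    rw [Fintype.card_sum, Fintype.card_coe, Fintype.card_coe, Nat.add_comm]
    exact hcard
  -- The matching relation
  set M : V → V → Prop := fun x y => ∃ i, tail i = x ∧ head i = y with hM
  -- Polynomial matrix
  set P : Matrix V V ℝ[X] :=
    Matrix.of (fun x y => if E x y then (if M x y then 1 else X) else 0) with hP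
  set q : ℝ[X] := (P.submatrix tail head).det with hq
  have hq0 : q.eval 0 = 1 := by
    have hmap : (P.submatrix tail head).map (eval 0) = (1 : Matrix (↥T ⊕ ↥H) (↥T ⊕ ↥H) ℝ) := by
      ext i j
      simp only [Matrix.map_apply, Matrix.submatrix_apply, hP, Matrix.of_apply]
      by_cases hij : i = j
      · subst hij
        rw [if_pos (hedge i), if_pos ⟨i, rfl, rfl⟩]
        simp [Matrix.one_apply]
      · have hnM : ¬ M (tail i) (head j) := by
          rintro ⟨k, hk1, hk2⟩
          exact hij ((htailinj hk1).symm.trans (hheadinj hk2))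
        rw [Matrix.one_apply_ne hij]
        by_cases hE : E (tail i) (head j)
        · rw [if_pos hE, if_neg hnM]; simp
        · rw [if_neg hE]; simp
    have h00 : eval 0 q = ((P.submatrix tail head).map (eval 0)).det := by
      have hdet' := RingHom.map_det (evalRingHom 0) (P.submatrix tail head)
      simp only [RingHom.mapMatrix_apply, coe_evalRingHom] at hdet'
      exact hdet'
    rw [h00, hmap, Matrix.det_one]
  have hqne : q ≠ 0 := fun h => by simp [h] at hq0
  have hXqne : (X : ℝ[X]) * q ≠ 0 := mul_ne_zero X_ne_zero hqne
  obtain ⟨ε, hε⟩ : ∃ ε : ℝ, ((X : ℝ[X]) * q).eval ε ≠ 0 := by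
    by_contra h
    push_neg at h
    exact hXqne (Polynomial.zero_of_eval_zero _ h)
  rw [Polynomial.eval_mul, Polynomial.eval_X] at hε
  have hεne : ε ≠ 0 := fun h => hε (by simp [h])
  have hqεne : q.eval ε ≠ 0 := fun h => hε (by simp [h])
  -- The weighted adjacency matrix
  refine ⟨P.map (eval ε), ?_, ?_⟩
  · intro X Y
    simp only [Matrix.map_apply, hP, Matrix.of_apply]
    by_cases hE : E X Y
    · rw [if_pos hE]
      constructor
      · intro _; exact hE
      · intro _
        by_cases hMxy : M X Y
        · rw [if_pos hMxy]; simp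
        · rw [if_neg hMxy]; simpa using hεne
    · rw [if_neg hE]
      simp [hE]
  · apply le_antisymm
    · have hcover : ∀ X Y : V, (P.map (eval ε)) X Y ≠ 0 → Y ∈ H ∨ X ∈ T := by
        intro X Y hne'
        apply hcov X Y
        by_contra hE
        apply hne'
        simp [hP, hE]
      calc (P.map (eval ε)).rank ≤ H.card + T.card := aux_rank_le_cover _ H T hcover
        _ = c := hcard
    · -- lower bound via the invertible submatrix
      have hdet : ((P.map (eval ε)).submatrix tail head).det ≠ 0 := by
        have : (P.map (eval ε)).submatrix tail head = (P.submatrix tail head).map (eval ε) := by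
          ext i j; rfl
        rw [this]
        have hdet' := RingHom.map_det (evalRingHom ε) (P.submatrix tail head)
        simp only [RingHom.mapMatrix_apply, coe_evalRingHom] at hdet'
        rw [← hdet']
        simpa using hqεne
      have hrk : ((P.map (eval ε)).submatrix tail head).rank = c := by
        rw [Matrix.rank_of_isUnit _ ((Matrix.isUnit_iff_isUnit_det _).2
          (isUnit_iff_ne_zero.2 hdet))]
        exact hcardι
      calc c = ((P.map (eval ε)).submatrix tail head).rank := hrk.symm
        _ ≤ (P.map (eval ε)).rank := aux_rank_submatrix_le _ _ _
end

section
/- Let G be a finite DAG on vertex set V with level l(G), and for 0 ≤ s ≤ l(G) let V_s be the set of vertices of level s. For 1 ≤ s ≤ l(G), let G_{s,s−1} be the undirected bipartite graph on V_s ∪ V_{s−1} whose edges are the pairs {X,Y} with X ∈ V_s, Y ∈ V_{s−1} and X→Y an edge of G, and let c_s be the number of connected components of G_{s,s−1} that contain at least one edge (non-singleton components). Then every weighted adjacency matrix W of G satisfies rank(W) ≥ Σ_{s=1}^{l(G)} c_s. -/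
/-- There is a directed path with `ℓ` edges starting at `X` in the graph with edge
relation `E`. -/
def HasPathFrom {V : Type*} (E : V → V → Prop) (X : V) (ℓ : ℕ) : Prop :=
  ∃ p : Fin (ℓ + 1) → V, p 0 = X ∧ ∀ i : Fin ℓ, E (p i.castSucc) (p i.succ)

/-- The level of a vertex `X`: the number of edges in a longest directed path
starting at `X`. -/
noncomputable def level {V : Type*} (E : V → V → Prop) (X : V) : ℕ :=
  sSup {ℓ : ℕ | HasPathFrom E X ℓ}

/-- The level of the graph: the number of edges in a longest directed path. -/
noncomputable def glevel {V : Type*} [Fintype V] (E : V → V → Prop) : ℕ :=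
  Finset.univ.sup fun X : V => level E X

/-- The set of vertices of level `s`. -/
def levelSet {V : Type*} (E : V → V → Prop) (s : ℕ) : Set V :=
  {X | level E X = s}

/-- The undirected bipartite graph `G_{s,s-1}` on the level sets `V_s` and `V_{s-1}`,
whose edges are the pairs `{X, Y}` with `X ∈ V_s`, `Y ∈ V_{s-1}` and `X → Y` an edge. -/
def bip {V : Type*} (E : V → V → Prop) (s : ℕ) : SimpleGraph V where
  Adj X Y := X ≠ Y ∧ ((level E X = s ∧ level E Y = s - 1 ∧ E X Y) ∨
    (level E Y = s ∧ level E X = s - 1 ∧ E Y X))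
  symm := ⟨fun _ _ h => ⟨h.1.symm, h.2.symm⟩⟩
  loopless := ⟨fun _ h => h.1 rfl⟩

/-- The number of non-singleton connected components of `G_{s,s-1}`
(components containing at least one edge). -/
noncomputable def numNonSingletonComponents {V : Type*} (E : V → V → Prop) (s : ℕ) : ℕ :=
  Set.ncard {c : (bip E s).ConnectedComponent |
    ∃ X Y : V, (bip E s).Adj X Y ∧ (bip E s).connectedComponentMk X = c}

set_option linter.unusedSectionVars false

section Aux
variable {V : Type*} [Fintype V] {E : V → V → Prop}

lemma hasPathFrom_zero (E : V → V → Prop) (X : V) : HasPathFrom E X 0 :=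
  ⟨fun _ => X, rfl, fun i => i.elim0⟩

lemma path_transGen {ℓ : ℕ} (p : Fin (ℓ + 1) → V)
    (hp : ∀ i : Fin ℓ, E (p i.castSucc) (p i.succ)) :
    ∀ j i : ℕ, ∀ (_ : i < j) (_ : j ≤ ℓ),
      Relation.TransGen E (p ⟨i, by omega⟩) (p ⟨j, by omega⟩) := by
  intro j
  induction j with
  | zero => intro i hij hj; exact absurd hij (by omega)
  | succ j ih =>
    intro i hij hj
    have hstep : E (p ⟨j, by omega⟩) (p ⟨j + 1, by omega⟩) := by
      have := hp ⟨j, by omega⟩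
      simpa using this
    rcases Nat.lt_succ_iff_lt_or_eq.mp hij with h | h
    · exact (ih i h (by omega)).tail hstep
    · subst h; exact Relation.TransGen.single hstep

lemma lt_card_of_hasPathFrom (hacyc : ∀ X : V, ¬ Relation.TransGen E X X)
    {X : V} {ℓ : ℕ} (h : HasPathFrom E X ℓ) : ℓ < Fintype.card V := by
  obtain ⟨p, -, hp⟩ := h
  have hinj : Function.Injective p := by
    intro i j hij
    by_contra hne
    rcases lt_trichotomy (i : ℕ) (j : ℕ) with h | h | h
    · have := path_transGen p hp j i h (Nat.lt_succ_iff.mp j.isLt)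
      simp only [Fin.eta] at this
      rw [hij] at this
      exact hacyc _ this
    · exact hne (Fin.ext h)
    · have := path_transGen p hp i j h (Nat.lt_succ_iff.mp i.isLt)
      simp only [Fin.eta] at this
      rw [hij] at this
      exact hacyc _ this
  have := Fintype.card_le_of_injective p hinj
  simpa using this

lemma bddAbove_path (hacyc : ∀ X : V, ¬ Relation.TransGen E X X) (X : V) :
    BddAbove {ℓ : ℕ | HasPathFrom E X ℓ} :=
  ⟨Fintype.card V, fun _ hℓ => (lt_card_of_hasPathFrom hacyc hℓ).le⟩

lemma hasPathFrom_level (hacyc : ∀ X : V, ¬ Relation.TransGen E X X) (X : V) :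
    HasPathFrom E X (level E X) :=
  Nat.sSup_mem ⟨0, by exact hasPathFrom_zero E X⟩ (bddAbove_path hacyc X)

lemma level_lt_of_edge (hacyc : ∀ X : V, ¬ Relation.TransGen E X X)
    {X Y : V} (h : E X Y) : level E Y < level E X := by
  obtain ⟨p, hp0, hp⟩ := hasPathFrom_level hacyc Y
  have hpath : HasPathFrom E X (level E Y + 1) := by
    refine ⟨Fin.cases X p, by simp, ?_⟩
    intro i
    induction i using Fin.cases with
    | zero =>
      show E (Fin.cases X p (Fin.castSucc 0)) (Fin.cases X p (Fin.succ 0))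
      rw [Fin.castSucc_zero, Fin.cases_zero, Fin.cases_succ, hp0]
      exact h
    | succ j =>
      have := hp j
      simpa [← Fin.succ_castSucc] using this
  have : level E Y + 1 ≤ level E X := le_csSup (bddAbove_path hacyc X) hpath
  omega

lemma level_le_glevel (X : V) : level E X ≤ glevel E :=
  Finset.le_sup (Finset.mem_univ X)

end Aux

/-- The set of non-singleton connected components of `bip E s`. -/
def compSet {V : Type*} (E : V → V → Prop) (s : ℕ) : Set ((bip E s).ConnectedComponent) :=
  {c | ∃ X Y : V, (bip E s).Adj X Y ∧ (bip E s).connectedComponentMk X = c}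

lemma numNonSingleton_eq_ncard {V : Type*} (E : V → V → Prop) (s : ℕ) :
    numNonSingletonComponents E s = (compSet E s).ncard := rfl


/-- Every weighted adjacency matrix of a finite DAG has rank at least
the sum, over levels `1 ≤ s ≤ l(G)`, of the number of non-singleton connected
components of the bipartite graph `G_{s,s-1}`. -/
theorem rank_ge_sum_components
    {V : Type*} [Fintype V] [DecidableEq V] (E : V → V → Prop)
    (hacyc : ∀ X : V, ¬ Relation.TransGen E X X)
    (W : Matrix V V ℝ) (hW : ∀ X Y : V, W X Y ≠ 0 ↔ E X Y) :
    ∑ s ∈ Finset.Icc 1 (glevel E), numNonSingletonComponents E s ≤ W.rank := by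
  classical
  letI instF : ∀ s : ℕ, Fintype ↥(compSet E s) := fun s => Fintype.ofFinite _
  set L := glevel E with hL
  -- index type: pairs (s, c) with s a level and c a non-singleton component
  let I : Type _ := (s : ↥(Finset.Icc 1 L)) × ↥(compSet E (s : ℕ))
  -- choose an oriented edge in each non-singleton component
  have h_exists : ∀ i : I, ∃ A B : V, E A B ∧ level E A = (i.1 : ℕ) ∧
      level E B = (i.1 : ℕ) - 1 ∧
      (bip E (i.1 : ℕ)).connectedComponentMk A = (i.2 : (bip E (i.1 : ℕ)).ConnectedComponent) ∧
      (bip E (i.1 : ℕ)).connectedComponentMk B = (i.2 : (bip E (i.1 : ℕ)).ConnectedComponent) := by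
    rintro ⟨s, c⟩
    obtain ⟨X, Y, hadj, hmkX⟩ := c.2
    have hmkY : (bip E (s : ℕ)).connectedComponentMk Y = c :=
      (SimpleGraph.ConnectedComponent.sound hadj.reachable).symm.trans hmkX
    rcases hadj.2 with ⟨h1, h2, h3⟩ | ⟨h1, h2, h3⟩
    · exact ⟨X, Y, h3, h1, h2, hmkX, hmkY⟩
    · exact ⟨Y, X, h3, h1, h2, hmkY, hmkX⟩
  choose A B hAB hlA hlB hmkA hmkB using h_exists
  -- the columns of W at B i
  let v : I → (V → ℝ) := fun i X => W X (B i)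
  -- support lemma
  have hsupport : ∀ i : I, ∀ X : V, level E X = (i.1 : ℕ) → W X (B i) ≠ 0 →
      (bip E (i.1 : ℕ)).connectedComponentMk X = (i.2 : (bip E (i.1 : ℕ)).ConnectedComponent) := by
    intro i X hlX hne
    have hE : E X (B i) := (hW _ _).mp hne
    have hs1 : 1 ≤ (i.1 : ℕ) := (Finset.mem_Icc.mp i.1.2).1
    have hadj : (bip E (i.1 : ℕ)).Adj X (B i) := by
      refine ⟨?_, Or.inl ⟨hlX, hlB i, hE⟩⟩
      intro hXB
      rw [hXB, hlB i] at hlX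
      omega
    exact (SimpleGraph.ConnectedComponent.sound hadj.reachable).trans (hmkB i)
  -- linear independence of the columns
  have hLI : LinearIndependent ℝ v := by
    rw [Fintype.linearIndependent_iff]
    intro g hsum
    have key : ∀ n : ℕ, ∀ i : I, (i.1 : ℕ) = n → g i = 0 := by
      intro n
      induction n using Nat.strong_induction_on with
      | _ n IH =>
        rintro ⟨s1, c1⟩ hin
        have hs := Finset.mem_Icc.mp s1.2
        have hin' : (s1 : ℕ) = n := hin
        have hrow := congrFun hsum (A ⟨s1, c1⟩)
        simp only [Finset.sum_apply, Pi.smul_apply, smul_eq_mul, Pi.zero_apply] at hrow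
        have hsingle : ∑ i' : I, g i' * v i' (A ⟨s1, c1⟩) =
            g ⟨s1, c1⟩ * v ⟨s1, c1⟩ (A ⟨s1, c1⟩) := by
          apply Finset.sum_eq_single_of_mem _ (Finset.mem_univ _)
          rintro ⟨s2, c2⟩ - hne
          rcases lt_trichotomy (s2 : ℕ) (s1 : ℕ) with h | h | h
          · rw [IH (s2 : ℕ) (by omega) ⟨s2, c2⟩ rfl, zero_mul]
          · -- same level, different components
            have e : s2 = s1 := Subtype.ext h
            subst e
            have hcne : c2 ≠ c1 := fun hcc => hne (by rw [hcc])
            have hz : v ⟨s2, c2⟩ (A ⟨s2, c1⟩) = 0 := by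
              by_contra hWne
              have hmk2 := hsupport ⟨s2, c2⟩ (A ⟨s2, c1⟩) (hlA ⟨s2, c1⟩) hWne
              have hmk1 := hmkA ⟨s2, c1⟩
              exact hcne (Subtype.ext (hmk2.symm.trans hmk1))
            rw [hz, mul_zero]
          · have hz : v ⟨s2, c2⟩ (A ⟨s1, c1⟩) = 0 := by
              by_contra hWne
              have hE := (hW _ _).mp hWne
              have hlt := level_lt_of_edge hacyc hE
              rw [hlA ⟨s1, c1⟩, hlB ⟨s2, c2⟩] at hlt
              have hs2 := Finset.mem_Icc.mp s2.2
              have e1 : (((⟨s1, c1⟩ : I).1 : ℕ)) = (s1 : ℕ) := rfl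
              have e2 : (((⟨s2, c2⟩ : I).1 : ℕ)) = (s2 : ℕ) := rfl
              omega
            rw [hz, mul_zero]
        rw [hsingle] at hrow
        have hWne : v ⟨s1, c1⟩ (A ⟨s1, c1⟩) ≠ 0 := (hW _ _).mpr (hAB ⟨s1, c1⟩)
        exact (mul_eq_zero.mp hrow).resolve_right hWne
    exact fun i => key (i.1 : ℕ) i rfl
  -- counting
  have hcard : Fintype.card I = ∑ s ∈ Finset.Icc 1 L, numNonSingletonComponents E s := by
    rw [Fintype.card_sigma, ← Finset.sum_coe_sort (Finset.Icc 1 L)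
      (fun s => numNonSingletonComponents E s)]
    refine Finset.sum_congr rfl fun s _ => ?_
    rw [numNonSingleton_eq_ncard, Set.ncard_eq_toFinset_card', Set.toFinset_card]
  -- rank bound
  have hmem : ∀ i : I, v i ∈ LinearMap.range W.mulVecLin := by
    intro i
    refine ⟨Pi.single (B i) 1, ?_⟩
    ext X
    simp [Matrix.mulVecLin_apply, Matrix.mulVec_single, v]
  have hspan : Submodule.span ℝ (Set.range v) ≤ LinearMap.range W.mulVecLin :=
    Submodule.span_le.mpr (Set.range_subset_iff.mpr hmem)
  calc ∑ s ∈ Finset.Icc 1 L, numNonSingletonComponents E s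
      = Fintype.card I := hcard.symm
    _ = Module.finrank ℝ ↥(Submodule.span ℝ (Set.range v)) := (finrank_span_eq_card hLI).symm
    _ ≤ Module.finrank ℝ ↥(LinearMap.range W.mulVecLin) := Submodule.finrank_mono hspan
    _ = W.rank := rfl
end

section
/- Let G be a finite DAG on vertex set V with level l(G) and level sets V_s, and let ch(V_s) denote the set of vertices having a parent in V_s. Then every weighted adjacency matrix W of G satisfies rank(W) ≤ Σ_{s=1}^{l(G)} min(|V_s|, |ch(V_s)|). -/
lemma path_transGen_s10 {V : Type*} {E : V → V → Prop} {ℓ : ℕ} {p : Fin (ℓ + 1) → V}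
    (hp : ∀ i : Fin ℓ, E (p i.castSucc) (p i.succ)) :
    ∀ b : ℕ, ∀ hb : b < ℓ + 1, ∀ a : ℕ, ∀ ha : a < b,
      Relation.TransGen E (p ⟨a, lt_trans ha hb⟩) (p ⟨b, hb⟩) := by
  intro b
  induction b with
  | zero => intro hb a ha; omega
  | succ n ih =>
    intro hb a ha
    have hn : n < ℓ := by omega
    have hstep : E (p ⟨n, by omega⟩) (p ⟨n + 1, hb⟩) := by
      have h := hp ⟨n, hn⟩
      simpa [Fin.castSucc, Fin.succ, Fin.castAdd, Fin.castLE] using h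
    rcases Nat.lt_succ_iff_lt_or_eq.mp ha with h | h
    · exact (ih (by omega) a h).tail hstep
    · subst h; exact Relation.TransGen.single hstep

lemma level_bddAbove {V : Type*} [Fintype V] {E : V → V → Prop}
    (hacyc : ∀ X : V, ¬ Relation.TransGen E X X) (X : V) :
    BddAbove {ℓ : ℕ | HasPathFrom E X ℓ} := by
  refine ⟨Fintype.card V, fun ℓ hℓ => ?_⟩
  obtain ⟨p, -, hp⟩ := hℓ
  have hinj : Function.Injective p := by
    intro i j hij
    by_contra hne
    rcases lt_or_gt_of_ne (fun h : i = j => hne (by rw [h])) with h | h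
    · have := path_transGen_s10 hp j j.isLt i h
      rw [show (⟨i.1, _⟩ : Fin (ℓ+1)) = i from rfl, show (⟨j.1, _⟩ : Fin (ℓ+1)) = j from rfl,
        hij] at this
      exact hacyc _ this
    · have := path_transGen_s10 hp i i.isLt j h
      rw [show (⟨i.1, _⟩ : Fin (ℓ+1)) = i from rfl, show (⟨j.1, _⟩ : Fin (ℓ+1)) = j from rfl,
        hij] at this
      exact hacyc _ this
  have := Fintype.card_le_of_injective p hinj
  simp only [Fintype.card_fin] at this
  omega

lemma one_le_level_of_edge {V : Type*} [Fintype V] {E : V → V → Prop}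
    (hacyc : ∀ X : V, ¬ Relation.TransGen E X X) {X Y : V} (h : E X Y) :
    1 ≤ level E X := by
  apply le_csSup (level_bddAbove hacyc X)
  refine ⟨![X, Y], rfl, fun i => ?_⟩
  fin_cases i
  simpa using h

lemma Matrix.rank_add_le' {m n : Type*} [Fintype m] [Fintype n]
    (A B : Matrix m n ℝ) : (A + B).rank ≤ A.rank + B.rank := by
  rw [Matrix.rank, Matrix.rank, Matrix.rank, Matrix.mulVecLin_add]
  have h : LinearMap.range (A.mulVecLin + B.mulVecLin) ≤
      LinearMap.range A.mulVecLin ⊔ LinearMap.range B.mulVecLin := by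
    rintro x ⟨v, rfl⟩
    exact Submodule.mem_sup.mpr ⟨A.mulVecLin v, ⟨v, rfl⟩, B.mulVecLin v, ⟨v, rfl⟩, rfl⟩
  refine le_trans (Submodule.finrank_mono h) ?_
  have := Submodule.finrank_sup_add_finrank_inf_eq
    (LinearMap.range A.mulVecLin) (LinearMap.range B.mulVecLin)
  omega

lemma Matrix.rank_sum_le' {ι m n : Type*} [Fintype m] [Fintype n]
    (s : Finset ι) (f : ι → Matrix m n ℝ) :
    (∑ i ∈ s, f i).rank ≤ ∑ i ∈ s, (f i).rank := by
  classical
  induction s using Finset.induction with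
  | empty => simp [Matrix.rank_zero]
  | insert _ _ hx ih =>
    rw [Finset.sum_insert hx, Finset.sum_insert hx]
    exact le_trans (Matrix.rank_add_le' _ _) (by gcongr)

/-- Every weighted adjacency matrix of a finite DAG has rank at most
`∑_{s=1}^{l(G)} min(|V_s|, |ch(V_s)|)`. -/
theorem rank_le_sum_min_level_children
    {V : Type*} [Fintype V] [DecidableEq V] (E : V → V → Prop)
    (hacyc : ∀ X : V, ¬ Relation.TransGen E X X)
    (W : Matrix V V ℝ) (hW : ∀ X Y : V, W X Y ≠ 0 ↔ E X Y) :
    W.rank ≤ ∑ s ∈ Finset.Icc 1 (glevel E),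
      min (levelSet E s).ncard {Y : V | ∃ X ∈ levelSet E s, E X Y}.ncard := by
  classical
  set L := glevel E with hL
  set d : ℕ → V → ℝ := fun s X => if level E X = s then 1 else 0 with hd
  set f : ℕ → Matrix V V ℝ := fun s => Matrix.diagonal (d s) * W with hf
  have hWsum : W = ∑ s ∈ Finset.Icc 1 L, f s := by
    ext X Y
    rw [Matrix.sum_apply]
    simp only [hf, hd, Matrix.diagonal_mul, ite_mul, one_mul, zero_mul]
    rw [Finset.sum_ite_eq (Finset.Icc 1 L) (level E X) (fun _ => W X Y)]
    by_cases h0 : W X Y = 0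
    · simp [h0]
    · have hE : E X Y := (hW X Y).mp h0
      have h1 : 1 ≤ level E X := one_le_level_of_edge hacyc hE
      have h2 : level E X ≤ L := Finset.le_sup (Finset.mem_univ X)
      rw [if_pos (Finset.mem_Icc.mpr ⟨h1, h2⟩)]
  calc W.rank = (∑ s ∈ Finset.Icc 1 L, f s).rank := by rw [← hWsum]
    _ ≤ ∑ s ∈ Finset.Icc 1 L, (f s).rank := Matrix.rank_sum_le' _ _
    _ ≤ _ := by
        apply Finset.sum_le_sum
        intro s _
        refine le_min ?_ ?_
        · -- row bound
          refine le_trans (Matrix.rank_mul_le_left _ _) ?_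
          rw [Matrix.rank_diagonal]
          apply le_of_eq
          rw [Set.ncard_eq_toFinset_card' (levelSet E s), Set.toFinset_card]
          exact Fintype.card_congr (Equiv.subtypeEquivRight (by intro X; simp [hd, levelSet]))
        · -- column bound
          set d' : V → ℝ := fun Y => if (∃ X ∈ levelSet E s, E X Y) then 1 else 0 with hd'
          have hfd : f s = f s * Matrix.diagonal d' := by
            ext X Y
            rw [Matrix.mul_diagonal]
            by_cases hc : ∃ X ∈ levelSet E s, E X Y
            · simp [hd', hc]
            · have : f s X Y = 0 := by
                simp only [hf, hd, Matrix.diagonal_mul, ite_mul, one_mul, zero_mul]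
                by_cases hl : level E X = s
                · rw [if_pos hl]
                  by_contra hne
                  exact hc ⟨X, hl, (hW X Y).mp hne⟩
                · rw [if_neg hl]
              simp [this]
          rw [hfd]
          refine le_trans (Matrix.rank_mul_le_right _ _) ?_
          rw [Matrix.rank_diagonal]
          apply le_of_eq
          rw [Set.ncard_eq_toFinset_card' {Y : V | ∃ X ∈ levelSet E s, E X Y}, Set.toFinset_card]
          exact Fintype.card_congr (Equiv.subtypeEquivRight (by intro Y; simp [hd']))
end
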